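/- arXiv:2105.15167 — 3 statements merged into one kernel-verified Lean document; each statement's English description precedes it below -/
import Mathlib

section
/- Let C be a braided monoidal category linear over a field k of characteristic zero, with End(I) ≅ k, and suppose every object is dualizable. Let e be an invertible transparent object (β_{e,x} ∘ β_{x,e} = id for all x) with β_{e,e} = −id_{e⊗e}. Then for every object b with η(b) ≠ 0 (in particular, every simple object of a braided fusion category), b is not isomorphic to e ⊗ (*b), where *b is a left dual of b. Equivalently: the equality η(e ⊗ *b) = −η(*b) = −η(b) together with η(b) = η(*b) and η(b) ≠ 0 shows b ≇ e ⊗ *b. -/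
open CategoryTheory MonoidalCategory

variable {C : Type*} [Category C] [MonoidalCategory C] [BraidedCategory C]

/-- Right duality data for `x` with dual object `d`. -/
structure DualityData (x d : C) where
  ev : x ⊗ d ⟶ 𝟙_ C
  coev : 𝟙_ C ⟶ d ⊗ x
  zigzag₁ : (ρ_ x).inv ≫ (x ◁ coev) ≫ (α_ x d x).inv ≫ (ev ▷ x) ≫ (λ_ x).hom = 𝟙 x
  zigzag₂ : (λ_ d).inv ≫ (coev ▷ d) ≫ (α_ d x d).hom ≫ (d ◁ ev) ≫ (ρ_ d).hom = 𝟙 d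

/-- The η-dimension associated to right duality data. -/
def etaDim {x d : C} (D : DualityData x d) : (𝟙_ C : C) ⟶ 𝟙_ C :=
  D.coev ≫ (β_ d x).hom ≫ D.ev

/-!
The η-dimension does not depend on the chosen duality data and is invariant under isomorphism;
it is unchanged by passing from `ℓ` to its dual `b` through the braiding, and it is multiplicative
on `e ⊗ ℓ` because transparency of `e` unlinks the two loops in the string diagram of
`η(e ⊗ ℓ)`. So `b ≅ e ⊗ ℓ` gives `η(b) = η(b) η(e)`, hence `η(e) = 1` as `η(b)` is a nonzero
scalar. For invertible `e` this forces `β_{e,e} = 1`, so `1 = -1` on `e ⊗ e` and, in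
characteristic zero, `e ⊗ e` is a zero object. Tensoring with an invertible object reflects
zero objects, so `𝟙_ C` is zero, contradicting `η(b) ≠ 0`.
-/

open BraidedCategory Limits

omit [MonoidalCategory C] [BraidedCategory C] in
lemma isIso_of_ne_zero_of_surjective_smul_id {k : Type*} [Field k] [Preadditive C] [Linear k C]
    {X : C} (hk : Function.Surjective fun a : k => a • 𝟙 X) {f : X ⟶ X} (hf : f ≠ 0) :
    IsIso f := by
  obtain ⟨a, rfl⟩ := hk f
  have ha : a ≠ 0 := by
    rintro rfl
    exact hf (zero_smul k _)
  exact ⟨a⁻¹ • 𝟙 X, by simp [smul_smul, ha], by simp [smul_smul, ha]⟩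

lemma eq_zero_of_self_eq_neg {k M : Type*} [Field k] [CharZero k] [AddCommGroup M] [Module k M]
    {x : M} (h : x = -x) : x = 0 := by
  have h2 : (2 : k) • x = 0 := by
    rw [two_smul]
    nth_rewrite 2 [h]
    exact add_neg_cancel x
  exact (smul_eq_zero.1 h2).resolve_left two_ne_zero

omit [BraidedCategory C] in
lemma whiskerRight_injective_of_tensor_iso_unit {e e' : C} (u : e ⊗ e' ≅ 𝟙_ C) (X Y : C) :
    Function.Injective fun f : X ⟶ Y => f ▷ e := by
  have key : ∀ f : X ⟶ Y, f = (ρ_ X).inv ≫ X ◁ u.inv ≫ (α_ X e e').inv ≫ (f ▷ e) ▷ e' ≫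
      (α_ Y e e').hom ≫ Y ◁ u.hom ≫ (ρ_ Y).hom := by
    intro f
    calc f = (ρ_ X).inv ≫ f ▷ 𝟙_ C ≫ (ρ_ Y).hom := by simp
      _ = (ρ_ X).inv ≫ X ◁ u.inv ≫ f ▷ (e ⊗ e') ≫ Y ◁ u.hom ≫ (ρ_ Y).hom := by
        rw [whisker_exchange_assoc]; simp
      _ = _ := by simp [whiskerRight_tensor]
  intro f g h
  rw [key f, key g]
  exact congrArg (fun t => _ ≫ _ ≫ _ ≫ t ▷ e' ≫ _) h

omit [BraidedCategory C] in
lemma isZero_of_isZero_tensor_of_iso_unit [HasZeroMorphisms C] {e e' : C}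
    (u : e ⊗ e' ≅ 𝟙_ C) {X : C} (h : IsZero (X ⊗ e)) : IsZero X :=
  (IsZero.iff_id_eq_zero X).2 <|
    whiskerRight_injective_of_tensor_iso_unit u X X (h.eq_of_src _ _)

namespace DualityData

variable {x y d d₁ d₂ x₁ x₂ : C}

omit [BraidedCategory C] in
lemma zigzag₁' (D : DualityData x d) :
    x ◁ D.coev ≫ (α_ x d x).inv ≫ D.ev ▷ x = (ρ_ x).hom ≫ (λ_ x).inv := by
  rw [← cancel_epi (ρ_ x).inv, ← cancel_mono (λ_ x).hom]
  simpa using D.zigzag₁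

abbrev toExactPairing (D : DualityData x d) : ExactPairing d x where
  coevaluation' := D.coev
  evaluation' := D.ev
  coevaluation_evaluation' := D.zigzag₁'
  evaluation_coevaluation' := by
    rw [← cancel_epi (λ_ d).inv, ← cancel_mono (ρ_ d).hom]
    simpa using D.zigzag₂

def ofExactPairing (x d : C) [ExactPairing d x] : DualityData x d where
  ev := ε_ d x
  coev := η_ d x
  zigzag₁ := by simp
  zigzag₂ := by simp

omit [BraidedCategory C] in
lemma exists_hom_dual (D₁ : DualityData x d₁) (D₂ : DualityData x d₂) :
    ∃ m : d₁ ⟶ d₂, D₁.coev ≫ m ▷ x = D₂.coev ∧ x ◁ m ≫ D₂.ev = D₁.ev := by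
  let _ := D₁.toExactPairing
  let _ := D₂.toExactPairing
  refine ⟨@leftAdjointMate C _ _ x x ⟨d₂⟩ ⟨d₁⟩ (𝟙 x), ?_, ?_⟩
  · have h := @coevaluation_comp_leftAdjointMate C _ _ x x ⟨d₂⟩ ⟨d₁⟩ (𝟙 x)
    simp only [whiskerLeft_id, Category.comp_id] at h
    exact h
  · have h := @leftAdjointMate_comp_evaluation C _ _ x x ⟨d₂⟩ ⟨d₁⟩ (𝟙 x)
    simp only [id_whiskerRight, Category.id_comp] at h
    exact h

theorem etaDim_unique (D₁ : DualityData x d₁) (D₂ : DualityData x d₂) :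
    etaDim D₁ = etaDim D₂ := by
  obtain ⟨m, hcoev, hev⟩ := exists_hom_dual D₁ D₂
  rw [etaDim, etaDim, ← hcoev, ← hev, ← braiding_naturality_left_assoc]
  simp

def flip (D : DualityData x d) : DualityData d x :=
  let _ := D.toExactPairing
  let _ := exactPairing_swap d x
  ofExactPairing d x

lemma etaDim_flip (D : DualityData x d) : etaDim D.flip = etaDim D := by
  change (D.coev ≫ (β_ x d).inv) ≫ (β_ x d).hom ≫ (β_ d x).hom ≫ D.ev = _
  simp [etaDim]

protected def congr (φ : x ≅ y) (D : DualityData y d) : DualityData x d :=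
  let _ := D.toExactPairing
  let _ := exactPairingCongrRight (X := d) φ
  ofExactPairing x d

lemma etaDim_congr (φ : x ≅ y) (D : DualityData y d) : etaDim (D.congr φ) = etaDim D := by
  change (D.coev ≫ d ◁ φ.inv) ≫ (β_ d x).hom ≫ φ.hom ▷ d ≫ D.ev = _
  simp [etaDim]

def tensor (D₁ : DualityData x₁ d₁) (D₂ : DualityData x₂ d₂) :
    DualityData (x₁ ⊗ x₂) (d₂ ⊗ d₁) :=
  let _ := D₁.toExactPairing
  let _ := D₂.toExactPairing
  ofExactPairing _ _

lemma etaDim_tensor_eq_coev_comp_scalar (D₁ : DualityData x₁ d₁) (D₂ : DualityData x₂ d₂)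
    (h : (β_ d₂ x₁).hom ≫ (β_ x₁ d₂).hom = 𝟙 _) :
    etaDim (D₁.tensor D₂) =
      D₂.coev ≫ d₂ ◁ ((λ_ x₂).inv ≫ etaDim D₁ ▷ x₂ ≫ (λ_ x₂).hom) ≫ (β_ d₂ x₂).hom ≫ D₂.ev := by
  -- Reversing the crossing of `d₂` with `x₁` unlinks the loops of `D₁` and `D₂`.
  have hfb : (β_ d₂ x₁).hom = (β_ x₁ d₂).inv := by
    rw [← cancel_mono (β_ x₁ d₂).hom, Iso.inv_hom_id, h]
  change (D₂.coev ⊗≫ (d₂ ◁ D₁.coev) ▷ x₂ ⊗≫ 𝟙 _) ≫ (β_ (d₂ ⊗ d₁) (x₁ ⊗ x₂)).hom ≫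
    (𝟙 _ ⊗≫ x₁ ◁ (D₂.ev ▷ d₁) ⊗≫ D₁.ev) = _
  unfold etaDim
  simp only [braiding_tensor_left_hom, braiding_tensor_right_hom]
  trans (D₂.coev ⊗≫ d₂ ◁ ((λ_ x₂).inv ≫ D₁.coev ▷ x₂) ⊗≫
      d₂ ◁ ((β_ d₁ x₁).hom ▷ x₂) ⊗≫
      ((β_ d₂ x₁).hom ▷ (d₁ ⊗ x₂) ≫ (x₁ ⊗ d₂) ◁ (β_ d₁ x₂).hom) ⊗≫
      x₁ ◁ ((β_ d₂ x₂).hom ▷ d₁) ⊗≫ x₁ ◁ (D₂.ev ▷ d₁) ⊗≫ D₁.ev)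
  · monoidal
  rw [← whisker_exchange, hfb]
  trans (D₂.coev ⊗≫ d₂ ◁ ((λ_ x₂).inv ≫ D₁.coev ▷ x₂) ⊗≫
      d₂ ◁ ((β_ d₁ x₁).hom ▷ x₂) ⊗≫
      d₂ ◁ (x₁ ◁ (β_ d₁ x₂).hom) ⊗≫
      d₂ ◁ (((β_ x₁ x₂).hom ≫ (β_ x₁ x₂).inv) ▷ d₁) ⊗≫
      ((β_ x₁ d₂).inv ▷ (x₂ ⊗ d₁)) ⊗≫
      x₁ ◁ (((β_ d₂ x₂).hom ≫ D₂.ev) ▷ d₁) ⊗≫ D₁.ev)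
  · rw [Iso.hom_inv_id]; monoidal
  trans (D₂.coev ⊗≫ d₂ ◁ ((λ_ x₂).inv ≫ D₁.coev ▷ x₂) ⊗≫
      d₂ ◁ ((β_ d₁ x₁).hom ▷ x₂) ⊗≫
      d₂ ◁ (x₁ ◁ (β_ d₁ x₂).hom) ⊗≫
      d₂ ◁ ((β_ x₁ x₂).hom ▷ d₁) ⊗≫
      (((β_ x₁ (d₂ ⊗ x₂)).inv ≫ x₁ ◁ ((β_ d₂ x₂).hom ≫ D₂.ev)) ▷ d₁) ⊗≫ D₁.ev)
  · rw [braiding_tensor_right_inv]; monoidal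
  rw [← braiding_inv_naturality_left, braiding_inv_tensorUnit_right]
  trans (D₂.coev ⊗≫ d₂ ◁ ((λ_ x₂).inv ≫ D₁.coev ▷ x₂) ⊗≫
      d₂ ◁ ((β_ d₁ x₁).hom ▷ x₂) ⊗≫
      d₂ ◁ (x₁ ◁ (β_ d₁ x₂).hom) ⊗≫
      d₂ ◁ ((β_ x₁ x₂).hom ▷ d₁) ⊗≫
      (((β_ d₂ x₂).hom ≫ D₂.ev) ▷ (x₁ ⊗ d₁) ≫ (𝟙_ C) ◁ D₁.ev) ⊗≫ 𝟙 (𝟙_ C))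
  · monoidal
  rw [← whisker_exchange]
  trans (D₂.coev ⊗≫ d₂ ◁ ((λ_ x₂).inv ≫ D₁.coev ▷ x₂) ⊗≫
      d₂ ◁ ((β_ d₁ x₁).hom ▷ x₂) ⊗≫
      d₂ ◁ ((β_ (x₁ ⊗ d₁) x₂).hom ≫ x₂ ◁ D₁.ev) ⊗≫
      (((β_ d₂ x₂).hom ≫ D₂.ev) ▷ (𝟙_ C)) ⊗≫ 𝟙 (𝟙_ C))
  · rw [braiding_tensor_left_hom]; monoidal
  rw [← braiding_naturality_left, braiding_tensorUnit_left]
  monoidal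

omit [BraidedCategory C] in
lemma whiskerRight_scalar_comp_ev (D : DualityData x d) (s : 𝟙_ C ⟶ 𝟙_ C) :
    ((λ_ x).inv ≫ s ▷ x ≫ (λ_ x).hom) ▷ d ≫ D.ev = D.ev ≫ s := by
  calc ((λ_ x).inv ≫ s ▷ x ≫ (λ_ x).hom) ▷ d ≫ D.ev
      = (λ_ _).inv ≫ (s ▷ (x ⊗ d) ≫ 𝟙_ C ◁ D.ev) ≫ (λ_ _).hom := by simp
    _ = D.ev ≫ s := by rw [← whisker_exchange]; simp [unitors_equal, unitors_inv_equal]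

lemma coev_comp_scalar_comp_braiding_comp_ev (D : DualityData x d) (s : 𝟙_ C ⟶ 𝟙_ C) :
    D.coev ≫ d ◁ ((λ_ x).inv ≫ s ▷ x ≫ (λ_ x).hom) ≫ (β_ d x).hom ≫ D.ev = etaDim D ≫ s := by
  rw [braiding_naturality_right_assoc, whiskerRight_scalar_comp_ev]
  simp [etaDim]

lemma etaDim_tensor (D₁ : DualityData x₁ d₁) (D₂ : DualityData x₂ d₂)
    (h : (β_ d₂ x₁).hom ≫ (β_ x₁ d₂).hom = 𝟙 _) :
    etaDim (D₁.tensor D₂) = etaDim D₂ ≫ etaDim D₁ := by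
  rw [etaDim_tensor_eq_coev_comp_scalar D₁ D₂ h, coev_comp_scalar_comp_braiding_comp_ev]

lemma braiding_self_eq_id_of_etaDim_eq_id {e e' : C} (E : DualityData e e')
    [IsIso E.ev] [IsIso E.coev] (hE : etaDim E = 𝟙 _) : (β_ e e).hom = 𝟙 _ := by
  have hβ : (β_ e' e).hom = inv E.coev ≫ inv E.ev := by
    rw [← cancel_epi E.coev, ← cancel_mono E.ev]
    simpa [etaDim] using hE
  have hzig : (α_ e e' e).hom ≫ e ◁ inv E.coev = E.ev ▷ e ≫ (λ_ e).hom ≫ (ρ_ e).inv := by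
    rw [← cancel_epi (e ◁ E.coev ≫ (α_ e e' e).inv), Category.assoc, Category.assoc,
      reassoc_of% E.zigzag₁']
    simp [← MonoidalCategory.whiskerLeft_comp]
  have hnat : (β_ (e ⊗ e') e).hom = E.ev ▷ e ≫ (β_ (𝟙_ C) e).hom ≫ e ◁ inv E.ev := by
    rw [braiding_naturality_left_assoc]
    simp [← MonoidalCategory.whiskerLeft_comp]
  rw [braiding_tensor_left_hom, braiding_tensorUnit_left, hβ] at hnat
  simp only [Category.assoc, MonoidalCategory.whiskerLeft_comp] at hnat
  rw [← reassoc_of% hzig] at hnat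
  apply whiskerRight_injective_of_tensor_iso_unit (asIso E.coev).symm
  dsimp only
  rw [id_whiskerRight, ← cancel_mono (α_ e e e').hom,
    ← cancel_epi ((α_ e e' e).hom ≫ e ◁ inv E.coev ≫ e ◁ inv E.ev ≫ (α_ e e e').inv)]
  simpa using hnat

end DualityData

open DualityData in
theorem not_iso_e_tensor_leftDual_general
    {k : Type*} [Field k] [CharZero k]
    [Preadditive C] [CategoryTheory.Linear k C]
    (hk : Function.Bijective fun a : k => a • (𝟙 (𝟙_ C)))
    {e e' : C} (E : DualityData e e') (hEev : IsIso E.ev) (hEcoev : IsIso E.coev)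
    (htransp : ∀ x : C, (β_ x e).hom ≫ (β_ e x).hom = 𝟙 (x ⊗ e))
    (hee : (β_ e e).hom = -(𝟙 (e ⊗ e)))
    {b d ℓ : C} (D : DualityData b d) (L : DualityData ℓ b)
    (hb : etaDim D ≠ 0) :
    ¬ Nonempty (b ≅ e ⊗ ℓ) := by
  rintro ⟨φ⟩
  have := hEev
  have := hEcoev
  have hE : etaDim E = 𝟙 _ := by
    have := isIso_of_ne_zero_of_surjective_smul_id hk.2 hb
    rw [← cancel_epi (etaDim D), Category.comp_id]
    calc etaDim D ≫ etaDim E = etaDim L ≫ etaDim E := by rw [etaDim_unique D L.flip, etaDim_flip]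
      _ = etaDim (E.tensor L) := (etaDim_tensor E L (htransp b)).symm
      _ = etaDim D := by rw [← etaDim_congr φ, etaDim_unique]
  have hβ := braiding_self_eq_id_of_etaDim_eq_id E hE
  have hee_zero : IsZero (e ⊗ e) :=
    (IsZero.iff_id_eq_zero _).2 (eq_zero_of_self_eq_neg (k := k) (hβ ▸ hee))
  have u : e ⊗ e' ≅ 𝟙_ C := asIso E.ev
  have he_zero : IsZero e := isZero_of_isZero_tensor_of_iso_unit u hee_zero
  have hunit : IsZero (𝟙_ C) := isZero_of_isZero_tensor_of_iso_unit u (he_zero.of_iso (λ_ e))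
  exact hb (hunit.eq_of_src _ _)

/-- Let `C` be a `k`-linear braided monoidal category over a field of
characteristic zero with `End(𝟙) ≅ k` and all objects dualizable.  If `e` is an invertible
transparent object with `β_{e,e} = -id`, then any object `b` with `η(b) ≠ 0` is not
isomorphic to `e ⊗ *b`, where `*b` is any left dual of `b`. -/
theorem not_iso_e_tensor_leftDual
    {k : Type*} [Field k] [CharZero k]
    [Preadditive C] [CategoryTheory.Linear k C]
    (hk : Function.Bijective fun a : k => a • (𝟙 (𝟙_ C)))
    (hdual : ∀ x : C, ∃ d : C, Nonempty (DualityData x d))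
    {e e' : C} (E : DualityData e e') (hEev : IsIso E.ev) (hEcoev : IsIso E.coev)
    (htransp : ∀ x : C, (β_ x e).hom ≫ (β_ e x).hom = 𝟙 (x ⊗ e))
    (hee : (β_ e e).hom = -(𝟙 (e ⊗ e)))
    {b d ℓ : C} (D : DualityData b d) (L : DualityData ℓ b)
    (hb : etaDim D ≠ 0) :
    ¬ Nonempty (b ≅ e ⊗ ℓ) :=
  not_iso_e_tensor_leftDual_general hk E hEev hEcoev htransp hee D L hb
end

section
/- Let F : B → C be a braided monoidal functor between braided monoidal categories. Then C becomes a braided right B-module category: the action c * b := c ⊗ F(b) together with the module braiding σ_{c,b} := β^C_{F(b),c} ∘ β^C_{c,F(b)} : c ⊗ F(b) → c ⊗ F(b) satisfies the two coherence conditions of a braided module category, namely σ_{m*x,y} ∘ (m * β^B_{x,y}) = (m * β^B⁻¹_{y,x}) ∘ (σ_{m,y} whiskered by x) (under the associator identifications m*(x⊗y) ≅ (m*x)*y etc.), and σ_{m*y,x} ∘ (σ_{m,y} * x) ∘ (m * β^B⁻¹_{y,x}) = (m * β^B_{x,y}) ∘ σ_{m,x⊗y}, and moreover σ_{m,I} is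 trivialized by the unitors. -/
/-!
The module braiding `σ_{m,b}` is the double braiding of `m` with `F b` in `C`. Since `F` is
braided, it sends `β^B` to `β^C` conjugated by its tensorator, so all three conditions become
identities about double braidings in `C`: `σ_{m,𝟙}` is trivial because the braiding with the unit
is given by the unitors, and the two coherence diagrams follow from the hexagon axioms, which
express the double braiding with a tensor product through the double braidings with its factors.
-/

open CategoryTheory MonoidalCategory

/-- The module braiding on `C` as a right `B`-module category via a braided functor
`F : B ⥤ C`: `σ_{m,b} = β_{F b, m} ∘ β_{m, F b}`. -/
def moduleBraiding {B C : Type*} [Category B] [MonoidalCategory B]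
    [Category C] [MonoidalCategory C] [BraidedCategory C]
    (F : B ⥤ C) (m : C) (b : B) : m ⊗ F.obj b ⟶ m ⊗ F.obj b :=
  (β_ m (F.obj b)).hom ≫ (β_ (F.obj b) m).hom

open BraidedCategory

namespace CategoryTheory.BraidedCategory

variable {C : Type*} [Category C] [MonoidalCategory C] [BraidedCategory C]

def doubleBraiding (X Y : C) : X ⊗ Y ⟶ X ⊗ Y := (β_ X Y).hom ≫ (β_ Y X).hom

theorem whiskerLeft_comp_doubleBraiding_assoc (X : C) {Y Z W : C} (f : Y ⟶ Z)
    (g : X ⊗ Z ⟶ W) : X ◁ f ≫ doubleBraiding X Z ≫ g = doubleBraiding X Y ≫ X ◁ f ≫ g := by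
  simp [doubleBraiding]

theorem doubleBraiding_eq_id_of_iso_tensorUnit (X : C) {U : C} (e : 𝟙_ C ≅ U) :
    doubleBraiding X U = 𝟙 _ := by
  rw [← cancel_epi (X ◁ e.hom), doubleBraiding, braiding_naturality_right_assoc,
    braiding_naturality_left, braiding_tensorUnit_right, braiding_tensorUnit_left]
  simp

theorem doubleBraiding_tensor_left (X Y Z : C) :
    doubleBraiding (X ⊗ Y) Z =
      (α_ X Y Z).hom ≫ X ◁ (β_ Y Z).hom ≫ (α_ X Z Y).inv ≫ doubleBraiding X Z ▷ Y ≫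
        (α_ X Z Y).hom ≫ X ◁ (β_ Z Y).hom ≫ (α_ X Y Z).inv := by
  simp [doubleBraiding, braiding_tensor_left_hom, braiding_tensor_right_hom]

theorem doubleBraiding_tensor_right (X Y Z : C) :
    doubleBraiding X (Y ⊗ Z) =
      X ◁ (β_ Z Y).inv ≫ (α_ X Z Y).inv ≫ doubleBraiding X Z ▷ Y ≫ (α_ X Z Y).hom ≫
        X ◁ (β_ Z Y).hom ≫ (α_ X Y Z).inv ≫ doubleBraiding X Y ▷ Z ≫ (α_ X Y Z).hom := by
  simp only [doubleBraiding, braiding_tensor_left_hom, braiding_tensor_right_hom,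
    comp_whiskerRight, Category.assoc]
  rw [← cancel_epi (X ◁ (β_ Z Y).hom), ← cancel_mono (α_ X Y Z).inv,
    ← cancel_mono ((β_ Y X).inv ▷ Z)]
  simp only [Category.assoc, Iso.hom_inv_id, Category.comp_id, whiskerLeft_hom_inv_assoc,
    hom_inv_whiskerRight]
  -- What remains are two presentations of the same braid on three strands.
  rw [← yang_baxter_assoc X Z Y]
  simp only [Iso.cancel_iso_inv_left, Iso.inv_hom_id_assoc]
  rw [← yang_baxter_assoc Z X Y]
  simp

end CategoryTheory.BraidedCategory

open Functor.LaxMonoidal Functor.OplaxMonoidal in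
theorem CategoryTheory.Functor.map_braiding_inv {B C : Type*} [Category B] [MonoidalCategory B]
    [BraidedCategory B] [Category C] [MonoidalCategory C] [BraidedCategory C]
    (F : B ⥤ C) [F.Braided] (X Y : B) :
    F.map (β_ X Y).inv = δ F Y X ≫ (β_ (F.obj X) (F.obj Y)).inv ≫ μ F X Y := by
  rw [← cancel_mono (F.map (β_ X Y).hom), ← F.map_comp]
  simp

theorem moduleBraiding_eq_doubleBraiding {B C : Type*} [Category B] [MonoidalCategory B]
    [Category C] [MonoidalCategory C] [BraidedCategory C] (F : B ⥤ C) (m : C) (b : B) :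
    moduleBraiding F m b = doubleBraiding m (F.obj b) :=
  rfl

/-- For a braided monoidal functor `F : B ⥤ C`, the action
`m * b := m ⊗ F b` and the module braiding `σ_{m,b} := β_{F b, m} ∘ β_{m, F b}` make `C` a
braided right `B`-module category: `σ_{m,𝟙}` is trivial, and the two coherence diagrams of a
braided module category commute (stated under the identifications
`(m*x)*y ≅ m*(x⊗y)` given by the associator of `C` and the monoidal structure of `F`). -/
theorem braided_functor_gives_braided_module
    {B C : Type*} [Category B] [MonoidalCategory B] [BraidedCategory B]
    [Category C] [MonoidalCategory C] [BraidedCategory C]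
    (F : B ⥤ C) [F.Braided] :
    (∀ m : C, moduleBraiding F m (𝟙_ B) = 𝟙 (m ⊗ F.obj (𝟙_ B))) ∧
    (∀ (m : C) (x y : B),
      (α_ m (F.obj x) (F.obj y)).hom ≫
        (m ◁ ((Functor.Monoidal.μIso F x y).hom ≫ F.map (β_ x y).hom ≫
          (Functor.Monoidal.μIso F y x).inv)) ≫
        (α_ m (F.obj y) (F.obj x)).inv ≫ (moduleBraiding F m y ▷ F.obj x) =
      moduleBraiding F (m ⊗ F.obj x) y ≫
        (α_ m (F.obj x) (F.obj y)).hom ≫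
        (m ◁ ((Functor.Monoidal.μIso F x y).hom ≫ F.map (β_ y x).inv ≫
          (Functor.Monoidal.μIso F y x).inv)) ≫
        (α_ m (F.obj y) (F.obj x)).inv) ∧
    (∀ (m : C) (x y : B),
      (m ◁ F.map (β_ y x).inv) ≫ (m ◁ (Functor.Monoidal.μIso F y x).inv) ≫
        (α_ m (F.obj y) (F.obj x)).inv ≫ (moduleBraiding F m y ▷ F.obj x) ≫
        moduleBraiding F (m ⊗ F.obj y) x =
      moduleBraiding F m (x ⊗ y) ≫ (m ◁ F.map (β_ x y).hom) ≫
        (m ◁ (Functor.Monoidal.μIso F y x).inv) ≫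
        (α_ m (F.obj y) (F.obj x)).inv) := by
  refine ⟨fun m => doubleBraiding_eq_id_of_iso_tensorUnit m (Functor.Monoidal.εIso F),
    fun m x y => ?_, fun m x y => ?_⟩
  · simp [moduleBraiding_eq_doubleBraiding, Functor.map_braiding_inv, doubleBraiding_tensor_left]
  · simp [moduleBraiding_eq_doubleBraiding, Functor.map_braiding_inv, doubleBraiding_tensor_left,
      ← whiskerLeft_comp_doubleBraiding_assoc, doubleBraiding_tensor_right]
end

section
/- Let C be a braided monoidal category, (A, γ) a half-braided algebra, and define γ^op on the opposite algebra A^op (multiplication μ_A ∘ β⁻¹_{A,A}) by (γ^op)_x := β_{x,A} ∘ γ_x⁻¹ ∘ β⁻¹_{A,x}. Then (A^op, γ^op) is a half-braided algebra: γ^op is natural and monoidal in x and compatible with μ_{A^op} in the sense of equation (hb). -/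
open CategoryTheory MonoidalCategory

variable {C : Type*} [Category C] [MonoidalCategory C] [BraidedCategory C]

/-- The data of a half-braided algebra: an object `X` with unit, multiplication, and a family
of isomorphisms `γ_b : b ⊗ X ≅ X ⊗ b`. -/
structure HBData (C : Type*) [Category C] [MonoidalCategory C] where
  X : C
  one : 𝟙_ C ⟶ X
  mul : X ⊗ X ⟶ X
  γ : ∀ b : C, b ⊗ X ≅ X ⊗ b

/-- The axioms of a half-braided algebra (Definition `HBA` of the paper): `(X, one, mul)` is a
unital associative algebra, and `γ` is natural and monoidal in `b` and compatible with the
multiplication (equation (hb)). -/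
structure IsHalfBraidedAlg (D : HBData C) : Prop where
  one_mul : (D.one ▷ D.X) ≫ D.mul = (λ_ D.X).hom
  mul_one : (D.X ◁ D.one) ≫ D.mul = (ρ_ D.X).hom
  mul_assoc : (D.mul ▷ D.X) ≫ D.mul = (α_ D.X D.X D.X).hom ≫ (D.X ◁ D.mul) ≫ D.mul
  γ_natural : ∀ {b b' : C} (f : b ⟶ b'),
    (f ▷ D.X) ≫ (D.γ b').hom = (D.γ b).hom ≫ (D.X ◁ f)
  γ_unit : (D.γ (𝟙_ C)).hom = (λ_ D.X).hom ≫ (ρ_ D.X).inv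
  γ_tensor : ∀ b c : C, (D.γ (b ⊗ c)).hom =
    (α_ b c D.X).hom ≫ (b ◁ (D.γ c).hom) ≫ (α_ b D.X c).inv ≫
      ((D.γ b).hom ▷ c) ≫ (α_ D.X b c).hom
  γ_mul : ∀ b : C, (b ◁ D.mul) ≫ (D.γ b).hom =
    (α_ b D.X D.X).inv ≫ ((D.γ b).hom ▷ D.X) ≫ (α_ D.X b D.X).hom ≫
      (D.X ◁ (D.γ b).hom) ≫ (α_ D.X D.X b).inv ≫ (D.mul ▷ b)

/-- The right opposite of half-braided algebra data: multiplication `μ ∘ β⁻¹_{A,A}` and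
half-braiding `(γ^op)_x = β_{x,A} ∘ γ_x⁻¹ ∘ β⁻¹_{A,x}`. -/
def opHB (D : HBData C) : HBData C where
  X := D.X
  one := D.one
  mul := (β_ D.X D.X).inv ≫ D.mul
  γ := fun b => (β_ D.X b).symm ≪≫ (D.γ b).symm ≪≫ β_ b D.X

/-!
The algebra axioms of `A^op` follow from those of `A` by naturality of the braiding, plus the
Yang–Baxter equation for associativity.

For the half-braiding, `γ⁻¹` is a half-braiding on `A` in the Drinfeld-center convention
`A ⊗ x ≅ x ⊗ A`, and conjugating any such half-braiding `h` by the braiding,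
`β⁻¹_{A,x} ≫ h_x ≫ β_{x,A}`, gives a natural family `x ⊗ A ≅ A ⊗ x`. It is monoidal because the
two conjugated halves of its component at `b ⊗ c` commute past each other, by naturality of `h`
at the braiding `β_{c,b}`. Compatibility with `μ ∘ β⁻¹` is (hb) for `γ⁻¹`,
slid through the braidings.
-/

open BraidedCategory

section Monoidal

variable {𝒞 : Type*} [Category 𝒞] [MonoidalCategory 𝒞]

lemma CategoryTheory.HalfBraiding.β_tensorUnit_hom {X : 𝒞} (h : HalfBraiding X) :
    (h.β (𝟙_ 𝒞)).hom = (ρ_ X).hom ≫ (λ_ X).inv := by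
  have key := h.naturality (λ_ (𝟙_ 𝒞)).hom
  simp only [h.monoidal, Category.assoc] at key
  set u := (h.β (𝟙_ 𝒞)).hom
  have idem : u ≫ ((λ_ X).hom ≫ (ρ_ X).inv) ≫ u = u ≫ 𝟙 _ :=
    calc u ≫ ((λ_ X).hom ≫ (ρ_ X).inv) ≫ u
        = 𝟙 _ ⊗≫ ((α_ _ _ _).inv ≫ (u ▷ 𝟙_ 𝒞) ≫ (α_ _ _ _).hom ≫ (𝟙_ 𝒞 ◁ u) ≫
            (α_ _ _ _).inv ≫ ((λ_ (𝟙_ 𝒞)).hom ▷ X)) ⊗≫ 𝟙 _ := by monoidal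
      _ = 𝟙 _ ⊗≫ ((X ◁ (λ_ (𝟙_ 𝒞)).hom) ≫ u) ⊗≫ 𝟙 _ := by rw [key]
      _ = u ≫ 𝟙 _ := by monoidal
  calc u = ((ρ_ X).hom ≫ (λ_ X).inv) ≫ ((λ_ X).hom ≫ (ρ_ X).inv) ≫ u := by simp
    _ = (ρ_ X).hom ≫ (λ_ X).inv := by rw [cancel_epi u |>.1 idem, Category.comp_id]

namespace IsHalfBraidedAlg

variable {D : HBData 𝒞}

def halfBraiding (hD : IsHalfBraidedAlg D) : HalfBraiding D.X where
  β b := (D.γ b).symm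
  monoidal b c := by
    rw [Iso.symm_hom, ← cancel_epi (D.γ (b ⊗ c)).hom, Iso.hom_inv_id, hD.γ_tensor]
    simp
  naturality f := by
    rw [Iso.symm_hom, Iso.symm_hom, ← cancel_epi (D.γ _).hom, ← Category.assoc,
      ← hD.γ_natural f]
    simp

lemma mul_whiskerRight_γ_inv (hD : IsHalfBraidedAlg D) (b : 𝒞) :
    (D.mul ▷ b) ≫ (D.γ b).inv = (α_ D.X D.X b).hom ≫ (D.X ◁ (D.γ b).inv) ≫
      (α_ D.X b D.X).inv ≫ ((D.γ b).inv ▷ D.X) ≫ (α_ b D.X D.X).hom ≫ (b ◁ D.mul) := by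
  rw [Iso.comp_inv_eq]
  simp [hD.γ_mul]

end IsHalfBraidedAlg

end Monoidal

lemma yang_baxter_inv (X Y Z : C) :
    (α_ Z Y X).inv ≫ ((β_ Y Z).inv ▷ X) ≫ (α_ Y Z X).hom ≫ (Y ◁ (β_ X Z).inv) ≫
      (α_ Y X Z).inv ≫ ((β_ X Y).inv ▷ Z) ≫ (α_ X Y Z).hom =
    (Z ◁ (β_ X Y).inv) ≫ (α_ Z X Y).inv ≫ ((β_ X Z).inv ▷ Y) ≫
      (α_ X Z Y).hom ≫ (X ◁ (β_ Y Z).inv) := by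
  simpa using congrArg Iso.inv (yang_baxter_iso X Y Z)

section OppositeAlgebra

variable {X : C} {one : 𝟙_ C ⟶ X} {mul : X ⊗ X ⟶ X}

lemma one_whiskerRight_braiding_inv_mul (h : (X ◁ one) ≫ mul = (ρ_ X).hom) :
    (one ▷ X) ≫ (β_ X X).inv ≫ mul = (λ_ X).hom := by
  rw [braiding_inv_naturality_left_assoc, h, braiding_inv_tensorUnit_right]
  simp

lemma whiskerLeft_one_braiding_inv_mul (h : (one ▷ X) ≫ mul = (λ_ X).hom) :
    (X ◁ one) ≫ (β_ X X).inv ≫ mul = (ρ_ X).hom := by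
  rw [braiding_inv_naturality_right_assoc, h, braiding_inv_tensorUnit_left]
  simp

lemma braiding_inv_mul_assoc (h : (mul ▷ X) ≫ mul = (α_ X X X).hom ≫ (X ◁ mul) ≫ mul) :
    (((β_ X X).inv ≫ mul) ▷ X) ≫ (β_ X X).inv ≫ mul =
      (α_ X X X).hom ≫ (X ◁ ((β_ X X).inv ≫ mul)) ≫ (β_ X X).inv ≫ mul := by
  rw [comp_whiskerRight, Category.assoc, braiding_inv_naturality_left_assoc,
    MonoidalCategory.whiskerLeft_comp, Category.assoc, braiding_inv_naturality_right_assoc, h]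
  simp only [braiding_tensor_left_inv, braiding_tensor_right_inv, Category.assoc,
    Iso.inv_hom_id_assoc]
  rw [← cancel_epi (α_ X X X).inv, reassoc_of% (yang_baxter_inv X X X)]
  simp

end OppositeAlgebra

lemma braiding_conj_whiskers {X b : C} (p : X ⊗ b ⟶ b ⊗ X) :
    (b ◁ (β_ X X).inv) ≫ (β_ (X ⊗ X) b).inv ≫ (α_ X X b).hom ≫ (X ◁ p) ≫ (α_ X b X).inv ≫
      (p ▷ X) ≫ (α_ b X X).hom ≫ (β_ b (X ⊗ X)).hom =
    (α_ b X X).inv ≫ (((β_ X b).inv ≫ p ≫ (β_ b X).hom) ▷ X) ≫ (α_ X b X).hom ≫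
      (X ◁ ((β_ X b).inv ≫ p ≫ (β_ b X).hom)) ≫ (α_ X X b).inv ≫ ((β_ X X).inv ▷ b) := by
  set q := (β_ X b).inv ≫ p ≫ (β_ b X).hom
  have slide_p : (β_ (X ⊗ X) b).inv ≫ ((β_ X X).inv ▷ b) ≫ (α_ X X b).hom ≫ (X ◁ p) =
      (α_ b X X).inv ≫ ((β_ X b).inv ▷ X) ≫ (p ▷ X) ≫ (α_ b X X).hom ≫
        (b ◁ (β_ X X).inv) ≫ (α_ b X X).inv ≫ ((β_ X b).inv ▷ X) ≫ (α_ X b X).hom := by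
    have h := braiding_inv_naturality_left p X
    simp only [braiding_tensor_right_inv, Category.assoc] at h
    simp only [braiding_tensor_left_inv, Category.assoc, ← h]
  have slide_q : (b ◁ (β_ X X).inv) ≫ (α_ b X X).inv ≫ (q ▷ X) ≫ (α_ X b X).hom ≫
        (X ◁ (β_ b X).hom) =
      (α_ b X X).inv ≫ ((β_ b X).hom ▷ X) ≫ (α_ X b X).hom ≫ (X ◁ q) ≫ (α_ X X b).inv ≫
        ((β_ X X).inv ▷ b) ≫ (α_ X X b).hom := by
    have h := braiding_naturality_left q X
    simp only [braiding_tensor_left_hom, Category.assoc] at h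
    rw [← cancel_mono ((α_ X X b).inv ≫ ((β_ X X).hom ▷ b) ≫ (α_ X X b).hom)]
    simp [h]
  calc
    _ = 𝟙 _ ⊗≫ ((β_ (X ⊗ X) b).inv ≫ ((β_ X X).inv ▷ b) ≫ (α_ X X b).hom ≫ (X ◁ p)) ⊗≫
        (p ▷ X) ⊗≫ (β_ b (X ⊗ X)).hom ⊗≫ 𝟙 _ := by
          rw [← braiding_inv_naturality_right_assoc]; monoidal
    _ = 𝟙 _ ⊗≫ ((β_ X b).inv ▷ X) ⊗≫ (p ▷ X) ⊗≫
        ((b ◁ (β_ X X).inv) ≫ (α_ b X X).inv ≫ (q ▷ X) ≫ (α_ X b X).hom ≫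
          (X ◁ (β_ b X).hom)) ⊗≫ 𝟙 _ := by
          rw [slide_p, braiding_tensor_right_hom]; monoidal
    _ = _ := by rw [slide_q]; monoidal

namespace CategoryTheory.HalfBraiding

variable {X : C} (h : HalfBraiding X)

def opIso (U : C) : U ⊗ X ≅ X ⊗ U :=
  (β_ X U).symm ≪≫ h.β U ≪≫ β_ U X

lemma opIso_hom (U : C) : (h.opIso U).hom = (β_ X U).inv ≫ (h.β U).hom ≫ (β_ U X).hom := rfl

lemma opIso_naturality {U U' : C} (f : U ⟶ U') :
    (f ▷ X) ≫ (h.opIso U').hom = (h.opIso U).hom ≫ (X ◁ f) := by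
  simp only [opIso_hom, braiding_inv_naturality_left_assoc, h.naturality_assoc,
    braiding_naturality_left, Category.assoc]

lemma opIso_tensorUnit : (h.opIso (𝟙_ C)).hom = (λ_ X).hom ≫ (ρ_ X).inv := by
  simp [opIso_hom, h.β_tensorUnit_hom, braiding_inv_tensorUnit_right, braiding_tensorUnit_left]

lemma monoidal_braiding (b c : C) :
    (α_ X b c).inv ≫ ((h.β b).hom ▷ c) ≫ (α_ b X c).hom ≫ (b ◁ (h.β c).hom) ≫
      (α_ b c X).inv =
    (X ◁ (β_ c b).inv) ≫ (α_ X c b).inv ≫ ((h.β c).hom ▷ b) ≫ (α_ c X b).hom ≫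
      (c ◁ (h.β b).hom) ≫ (α_ c b X).inv ≫ ((β_ c b).hom ▷ X) := by
  have key := h.naturality (β_ c b).inv
  rw [h.monoidal, h.monoidal] at key
  simp only [Category.assoc] at key
  rw [← cancel_mono ((β_ c b).inv ▷ X)]
  simp only [Category.assoc]
  rw [reassoc_of% key]
  simp

lemma opIso_exchange (b c : C) :
    (((β_ X b).inv ≫ (h.β b).hom) ▷ c) ≫ (α_ b X c).hom ≫
      (b ◁ ((h.β c).hom ≫ (β_ c X).hom)) ≫ (α_ b X c).inv =
    (α_ b X c).hom ≫ (b ◁ ((h.β c).hom ≫ (β_ c X).hom)) ≫ (α_ b X c).inv ≫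
      (((β_ X b).inv ≫ (h.β b).hom) ▷ c) := by
  calc
    _ = 𝟙 _ ⊗≫ ((β_ X b).inv ▷ c) ⊗≫
        ((α_ X b c).inv ≫ ((h.β b).hom ▷ c) ≫ (α_ b X c).hom ≫ (b ◁ (h.β c).hom) ≫
          (α_ b c X).inv) ⊗≫ (b ◁ (β_ c X).hom) ⊗≫ 𝟙 _ := by monoidal
    _ = 𝟙 _ ⊗≫ ((β_ X b).inv ▷ c) ⊗≫
        ((X ◁ (β_ c b).inv) ≫ (α_ X c b).inv ≫ ((h.β c).hom ▷ b) ≫ (α_ c X b).hom ≫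
          (c ◁ (h.β b).hom) ≫ (α_ c b X).inv ≫ ((β_ c b).hom ▷ X)) ⊗≫
        (b ◁ (β_ c X).hom) ⊗≫ 𝟙 _ := by rw [h.monoidal_braiding b c]
    _ = 𝟙 _ ⊗≫ (((β_ (X ⊗ c) b).inv) ≫ ((h.β c).hom ▷ b)) ⊗≫
        ((c ◁ (h.β b).hom) ≫ (α_ c b X).inv ≫ ((β_ c b).hom ▷ X)) ⊗≫
        (b ◁ (β_ c X).hom) ⊗≫ 𝟙 _ := by
          rw [braiding_tensor_left_inv X c b]; monoidal
    _ = 𝟙 _ ⊗≫ ((b ◁ (h.β c).hom) ≫ (β_ (c ⊗ X) b).inv) ⊗≫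
        ((c ◁ (h.β b).hom) ≫ (α_ c b X).inv ≫ ((β_ c b).hom ▷ X)) ⊗≫
        (b ◁ (β_ c X).hom) ⊗≫ 𝟙 _ := by
          rw [← braiding_inv_naturality_right b (h.β c).hom]
    _ = 𝟙 _ ⊗≫ (b ◁ (h.β c).hom) ⊗≫ ((β_ c b).inv ▷ X) ⊗≫
        ((c ◁ ((β_ X b).inv ≫ (h.β b).hom)) ≫ (α_ c b X).inv ≫ ((β_ c b).hom ▷ X)) ⊗≫
        (b ◁ (β_ c X).hom) ⊗≫ 𝟙 _ := by
          rw [braiding_tensor_left_inv c X b]; monoidal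
    _ = 𝟙 _ ⊗≫ (b ◁ (h.β c).hom) ⊗≫ ((β_ c b).inv ▷ X) ⊗≫
        ((c ◁ ((β_ X b).inv ≫ (h.β b).hom)) ≫ (β_ c (b ⊗ X)).hom) ⊗≫ 𝟙 _ := by
          rw [braiding_tensor_right_hom c b X]; monoidal
    _ = 𝟙 _ ⊗≫ (b ◁ (h.β c).hom) ⊗≫ ((β_ c b).inv ▷ X) ⊗≫
        ((β_ c (b ⊗ X)).hom ≫ (((β_ X b).inv ≫ (h.β b).hom) ▷ c)) ⊗≫ 𝟙 _ := by
          rw [braiding_naturality_right c ((β_ X b).inv ≫ (h.β b).hom)]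
    _ = 𝟙 _ ⊗≫ (b ◁ (h.β c).hom) ⊗≫ (((β_ c b).inv ≫ (β_ c b).hom) ▷ X) ⊗≫
        (b ◁ (β_ c X).hom) ⊗≫ (((β_ X b).inv ≫ (h.β b).hom) ▷ c) ⊗≫ 𝟙 _ := by
          rw [braiding_tensor_right_hom c b X]; monoidal
    _ = _ := by rw [Iso.inv_hom_id]; monoidal

lemma opIso_tensor (b c : C) :
    (h.opIso (b ⊗ c)).hom = (α_ b c X).hom ≫ (b ◁ (h.opIso c).hom) ≫ (α_ b X c).inv ≫
      ((h.opIso b).hom ▷ c) ≫ (α_ X b c).hom := by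
  simp only [opIso_hom, h.monoidal]
  calc
    _ = 𝟙 _ ⊗≫ (b ◁ (β_ X c).inv) ⊗≫
        ((((β_ X b).inv ≫ (h.β b).hom) ▷ c) ≫ (α_ b X c).hom ≫
          (b ◁ ((h.β c).hom ≫ (β_ c X).hom)) ≫ (α_ b X c).inv) ⊗≫
        ((β_ b X).hom ▷ c) ⊗≫ 𝟙 _ := by
          rw [braiding_tensor_right_inv X b c, braiding_tensor_left_hom b c X]
          monoidal
    _ = 𝟙 _ ⊗≫ (b ◁ (β_ X c).inv) ⊗≫
        ((α_ b X c).hom ≫ (b ◁ ((h.β c).hom ≫ (β_ c X).hom)) ≫ (α_ b X c).inv ≫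
          (((β_ X b).inv ≫ (h.β b).hom) ▷ c)) ⊗≫
        ((β_ b X).hom ▷ c) ⊗≫ 𝟙 _ := by rw [h.opIso_exchange b c]
    _ = _ := by monoidal

lemma opIso_mul {mul : X ⊗ X ⟶ X} {b : C}
    (hmul : (mul ▷ b) ≫ (h.β b).hom = (α_ X X b).hom ≫ (X ◁ (h.β b).hom) ≫ (α_ X b X).inv ≫
      ((h.β b).hom ▷ X) ≫ (α_ b X X).hom ≫ (b ◁ mul)) :
    (b ◁ ((β_ X X).inv ≫ mul)) ≫ (h.opIso b).hom =
      (α_ b X X).inv ≫ ((h.opIso b).hom ▷ X) ≫ (α_ X b X).hom ≫ (X ◁ (h.opIso b).hom) ≫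
        (α_ X X b).inv ≫ (((β_ X X).inv ≫ mul) ▷ b) := by
  calc
    _ = (b ◁ (β_ X X).inv) ≫ (β_ (X ⊗ X) b).inv ≫ ((mul ▷ b) ≫ (h.β b).hom) ≫
        (β_ b X).hom := by
          simp only [opIso_hom, MonoidalCategory.whiskerLeft_comp, Category.assoc,
            braiding_inv_naturality_right_assoc]
    _ = ((b ◁ (β_ X X).inv) ≫ (β_ (X ⊗ X) b).inv ≫ (α_ X X b).hom ≫ (X ◁ (h.β b).hom) ≫
        (α_ X b X).inv ≫ ((h.β b).hom ▷ X) ≫ (α_ b X X).hom ≫ (β_ b (X ⊗ X)).hom) ≫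
        (mul ▷ b) := by
          simp only [hmul, Category.assoc, braiding_naturality_right]
    _ = _ := by
          rw [braiding_conj_whiskers]
          simp only [opIso_hom, comp_whiskerRight, Category.assoc]

end CategoryTheory.HalfBraiding

/-- For a half-braided algebra `(A, γ)`, the right opposite
`(A^op, γ^op)` with `μ_{A^op} = μ_A ∘ β⁻¹_{A,A}` and
`(γ^op)_x = β_{x,A} ∘ γ_x⁻¹ ∘ β⁻¹_{A,x}` is again a half-braided algebra. -/
theorem opHB_isHalfBraidedAlg (D : HBData C) (hD : IsHalfBraidedAlg D) :
    IsHalfBraidedAlg (opHB D) :=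
  { one_mul := one_whiskerRight_braiding_inv_mul hD.mul_one
    mul_one := whiskerLeft_one_braiding_inv_mul hD.one_mul
    mul_assoc := braiding_inv_mul_assoc hD.mul_assoc
    γ_natural := hD.halfBraiding.opIso_naturality
    γ_unit := hD.halfBraiding.opIso_tensorUnit
    γ_tensor := hD.halfBraiding.opIso_tensor
    γ_mul := fun _ => hD.halfBraiding.opIso_mul (hD.mul_whiskerRight_γ_inv _) }
end
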